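/- For a finite zero-sum game with payoff matrix Ξ and mixed strategies over simplices, the upper value equals the lower value: min over σ in the simplex of max over β in the simplex of β'Ξσ equals max over β of min over σ of β'Ξσ (the minimax theorem for matrix games). -/

import Mathlib

/-!
Weak duality `sup inf ≤ inf sup` holds for any bounded payoff. For the converse let `L` be the
lower value; by compactness every row strategy `β` has a reply `σ` with `β'Ξσ ≤ L`. If no column
strategy `σ₀` had `Ξσ₀ ≤ L` coordinatewise, the compact convex set `Ξ Δ` would be disjoint from the
closed set `{y | y ≤ L}`. A functional separating them is nonnegative, since that set is unbounded
below in every coordinate, so it normalises to a row strategy beating `L` against every `σ`.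
Hence such a `σ₀` exists, and it gives `β'Ξσ₀ ≤ L` for every `β`.
-/

open Set Matrix

section ConditionallyCompleteLattice

variable {α X Y : Type*} [ConditionallyCompleteLattice α] {f : X → Y → α}

theorem ciInf_le_ciSup_of_bdd (hA : ∀ y, BddAbove (range fun x => f x y))
    (hB : ∀ x, BddBelow (range (f x))) (x : X) (y : Y) : ⨅ y', f x y' ≤ ⨆ x', f x' y :=
  (ciInf_le (hB x) y).trans (le_ciSup (hA y) x)

theorem bddAbove_range_ciInf [Nonempty Y] (hA : ∀ y, BddAbove (range fun x => f x y))
    (hB : ∀ x, BddBelow (range (f x))) : BddAbove (range fun x => ⨅ y, f x y) :=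
  ⟨⨆ x, f x (Classical.arbitrary Y), by
    rintro _ ⟨x, rfl⟩
    exact ciInf_le_ciSup_of_bdd hA hB x _⟩

theorem bddBelow_range_ciSup [Nonempty X] (hA : ∀ y, BddAbove (range fun x => f x y))
    (hB : ∀ x, BddBelow (range (f x))) : BddBelow (range fun y => ⨆ x, f x y) :=
  ⟨⨅ y, f (Classical.arbitrary X) y, by
    rintro _ ⟨y, rfl⟩
    exact ciInf_le_ciSup_of_bdd hA hB _ y⟩

theorem ciSup_ciInf_le_ciInf_ciSup [Nonempty X] [Nonempty Y]
    (hA : ∀ y, BddAbove (range fun x => f x y)) (hB : ∀ x, BddBelow (range (f x))) :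
    ⨆ x, ⨅ y, f x y ≤ ⨅ y, ⨆ x, f x y :=
  le_ciInf fun y => ciSup_le fun x => ciInf_le_ciSup_of_bdd hA hB x y

end ConditionallyCompleteLattice

theorem LinearMap.map_nonneg_of_bddAbove_Iic {E : Type*} [AddCommGroup E] [PartialOrder E]
    [IsOrderedAddMonoid E] [Module ℝ E] [PosSMulMono ℝ E] (ℓ : E →ₗ[ℝ] ℝ) {c : E} {u : ℝ}
    (h : ∀ x ≤ c, ℓ x ≤ u) {p : E} (hp : 0 ≤ p) : 0 ≤ ℓ p := by
  by_contra! hneg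
  have hc : ℓ c ≤ u := h c le_rfl
  -- moving from `c` along `-p` by `t` raises `ℓ` to `u + 1`
  set t := (u - ℓ c + 1) / -ℓ p
  have ht : t * ℓ p = -(u - ℓ c + 1) := by
    simp only [t, div_neg, neg_mul, div_mul_cancel₀ _ hneg.ne]
  have := h (c - t • p) (sub_le_self _ (smul_nonneg (div_nonneg (by linarith) (by linarith)) hp))
  rw [map_sub, map_smul, smul_eq_mul, ht] at this
  linarith

theorem LinearMap.apply_eq_dotProduct {ι R : Type*} [Fintype ι] [DecidableEq ι] [CommSemiring R]
    (ℓ : (ι → R) →ₗ[R] R) (x : ι → R) : ℓ x = (fun i => ℓ (Pi.single i 1)) ⬝ᵥ x := by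
  rw [ℓ.pi_apply_eq_sum_univ x, dotProduct]
  refine Finset.sum_congr rfl fun i _ => ?_
  rw [smul_eq_mul, mul_comm]
  congr 2
  ext j
  simp [Pi.single_apply, eq_comm]

theorem exists_nonneg_dotProduct_lt_of_disjoint_Iic {ι : Type*} [Fintype ι] {K : Set (ι → ℝ)}
    (hKconv : Convex ℝ K) (hKcomp : IsCompact K) {c : ι → ℝ} (hdisj : Disjoint (Iic c) K) :
    ∃ b, 0 ≤ b ∧ ∀ k ∈ K, b ⬝ᵥ c < b ⬝ᵥ k := by
  classical
  obtain ⟨ℓ, u, v, hc, huv, hK⟩ :=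
    geometric_hahn_banach_closed_compact (convex_Iic c) isClosed_Iic hKconv hKcomp hdisj
  have hℓ (x : ι → ℝ) : ℓ x = (fun i => ℓ (Pi.single i 1)) ⬝ᵥ x :=
    ℓ.toLinearMap.apply_eq_dotProduct x
  refine ⟨fun i => ℓ (Pi.single i 1), fun i => ?_, fun k hk => ?_⟩
  · exact ℓ.toLinearMap.map_nonneg_of_bddAbove_Iic (fun x hx => (hc x hx).le)
      (Pi.single_nonneg.2 zero_le_one)
  · rw [← hℓ, ← hℓ]
    linarith [hc c (mem_Iic.2 le_rfl), hK k hk]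

theorem smul_inv_sum_mem_stdSimplex {ι : Type*} [Fintype ι] {b : ι → ℝ} (hb : 0 ≤ b)
    (hs : 0 < ∑ i, b i) : (∑ i, b i)⁻¹ • b ∈ stdSimplex ℝ ι :=
  ⟨fun i => smul_nonneg (inv_nonneg.2 hs.le) (hb i), by
    simp only [Pi.smul_apply, smul_eq_mul, ← Finset.mul_sum, inv_mul_cancel₀ hs.ne']⟩

theorem dotProduct_le_of_mem_stdSimplex {ι : Type*} [Fintype ι] {β x : ι → ℝ} {L : ℝ}
    (hβ : β ∈ stdSimplex ℝ ι) (hx : x ≤ fun _ => L) : β ⬝ᵥ x ≤ L :=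
  calc β ⬝ᵥ x ≤ β ⬝ᵥ fun _ => L := dotProduct_le_dotProduct_of_nonneg_left hx hβ.1
    _ = L := by simp [dotProduct, ← Finset.sum_mul, hβ.2]

theorem Matrix.exists_mulVec_le_of_forall_exists_dotProduct_mulVec_le {ι κ : Type*} [Fintype ι]
    [Fintype κ] [Nonempty κ] (A : Matrix ι κ ℝ) (L : ℝ)
    (h : ∀ β ∈ stdSimplex ℝ ι, ∃ σ ∈ stdSimplex ℝ κ, β ⬝ᵥ A *ᵥ σ ≤ L) :
    ∃ σ ∈ stdSimplex ℝ κ, A *ᵥ σ ≤ fun _ => L := by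
  by_contra! hcon
  have hdisj : Disjoint (Iic fun _ => L) (A.mulVecLin '' stdSimplex ℝ κ) := by
    rw [Set.disjoint_left]
    rintro _ hle ⟨σ, hσ, rfl⟩
    exact hcon σ hσ hle
  obtain ⟨b, hb, hsep⟩ := exists_nonneg_dotProduct_lt_of_disjoint_Iic
    ((convex_stdSimplex ℝ κ).linear_image _)
    ((isCompact_stdSimplex ℝ κ).image A.mulVecLin.continuous_of_finiteDimensional) hdisj
  obtain ⟨σ₀⟩ := (inferInstance : Nonempty (stdSimplex ℝ κ))
  have hb0 : b ≠ 0 := by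
    rintro rfl
    simpa using hsep _ ⟨σ₀, σ₀.2, rfl⟩
  obtain ⟨i, hi⟩ := Function.ne_iff.1 hb0
  have hs : 0 < ∑ i, b i :=
    Finset.sum_pos' (fun j _ => hb j) ⟨i, Finset.mem_univ i, (hb i).lt_of_ne' hi⟩
  obtain ⟨σ, hσ, hle⟩ := h _ (smul_inv_sum_mem_stdSimplex hb hs)
  have hlt := hsep _ ⟨σ, hσ, rfl⟩
  rw [smul_dotProduct, smul_eq_mul, inv_mul_le_iff₀ hs] at hle
  simp only [Matrix.mulVecLin_apply, dotProduct, ← Finset.sum_mul] at hlt hle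
  linarith

theorem Matrix.ciInf_ciSup_dotProduct_mulVec_eq_ciSup_ciInf {ι κ : Type*} [Fintype ι] [Fintype κ]
    [Nonempty ι] [Nonempty κ] (A : Matrix ι κ ℝ) :
    (⨅ σ : ↥(stdSimplex ℝ κ), ⨆ β : ↥(stdSimplex ℝ ι), (β : ι → ℝ) ⬝ᵥ A *ᵥ (σ : κ → ℝ)) =
      ⨆ β : ↥(stdSimplex ℝ ι), ⨅ σ : ↥(stdSimplex ℝ κ), (β : ι → ℝ) ⬝ᵥ A *ᵥ (σ : κ → ℝ) := by
  set f : stdSimplex ℝ ι → stdSimplex ℝ κ → ℝ := fun β σ => (β : ι → ℝ) ⬝ᵥ A *ᵥ (σ : κ → ℝ)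
  have hf_left (σ) : Continuous (f · σ) := continuous_subtype_val.dotProduct continuous_const
  have hf_right (β) : Continuous (f β) :=
    continuous_const.dotProduct (continuous_const.matrix_mulVec continuous_subtype_val)
  have hA (σ) := (isCompact_range (hf_left σ)).bddAbove
  have hB (β) := (isCompact_range (hf_right β)).bddBelow
  obtain ⟨σ₀, hσ₀, hσ₀_le⟩ := A.exists_mulVec_le_of_forall_exists_dotProduct_mulVec_le
    (⨆ β, ⨅ σ, f β σ) fun β hβ => by
      obtain ⟨σ, -, hσ⟩ :=
        isCompact_univ.exists_isMinOn univ_nonempty (hf_right ⟨β, hβ⟩).continuousOn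
      exact ⟨σ, σ.2, (le_ciInf fun σ' => hσ (mem_univ σ')).trans
        (le_ciSup (bddAbove_range_ciInf hA hB) ⟨β, hβ⟩)⟩
  refine le_antisymm ?_ (ciSup_ciInf_le_ciInf_ciSup hA hB)
  exact (ciInf_le (bddBelow_range_ciSup hA hB) ⟨σ₀, hσ₀⟩).trans
    (ciSup_le fun β => dotProduct_le_of_mem_stdSimplex β.2 hσ₀_le)

/-- Minimax theorem for finite zero-sum matrix games: the upper value equals the
lower value, where mixed strategies range over the probability simplices. -/
theorem matrix_game_minimax {ν μ : ℕ} (hν : 0 < ν) (hμ : 0 < μ)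
    (Ξ : Matrix (Fin ν) (Fin μ) ℝ) :
    (⨅ σ : ↥(stdSimplex ℝ (Fin μ)), ⨆ β : ↥(stdSimplex ℝ (Fin ν)),
        dotProduct (β : Fin ν → ℝ) (Ξ.mulVec (σ : Fin μ → ℝ))) =
    (⨆ β : ↥(stdSimplex ℝ (Fin ν)), ⨅ σ : ↥(stdSimplex ℝ (Fin μ)),
        dotProduct (β : Fin ν → ℝ) (Ξ.mulVec (σ : Fin μ → ℝ))) := by
  have : Nonempty (Fin ν) := Fin.pos_iff_nonempty.mp hν
  have : Nonempty (Fin μ) := Fin.pos_iff_nonempty.mp hμ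
  exact Ξ.ciInf_ciSup_dotProduct_mulVec_eq_ciSup_ciInf
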